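/- Let A be a finitely generated ℤ^k-graded ℂ-algebra whose weight cone (the convex cone in ℚ^k generated by the degrees of nonzero homogeneous components) contains no line and with A₀ = ℂ. Then there exists a group homomorphism ℤ^k → ℤ under which the induced ℤ-grading of A is nonnegative with degree-zero component equal to ℂ; in particular Spec A is a quasicone. -/

import Mathlib

/-!
Every weight of a finitely generated graded algebra lies in the monoid generated by the finite
set `S` of weights of the homogeneous components of a generating set. Pointedness of the weight
cone says that the nonzero weights in `S` satisfy no nontrivial nonnegative rational relation, so
by Gordan's lemma some rational functional is positive on all of them. Clearing denominators
gives `φ : ℤ^k → ℤ`, which is then positive on every nonzero element of the monoid.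
-/

/-- `v` lies in the (rational) weight cone of the grading `𝒜`: it is a nonnegative
rational combination of weights of nonzero homogeneous components. -/
def InWeightCone {k : ℕ} {A : Type} [CommRing A] [Algebra ℂ A]
    (𝒜 : (Fin k → ℤ) → Submodule ℂ A) (v : Fin k → ℚ) : Prop :=
  ∃ (s : Finset (Fin k → ℤ)) (c : (Fin k → ℤ) → ℚ),
    (∀ w ∈ s, 𝒜 w ≠ ⊥ ∧ 0 ≤ c w) ∧
    v = ∑ w ∈ s, c w • fun i => ((w i : ℚ))

section Gordan

variable (K : Type*) {V ι : Type*} [Field K] [LinearOrder K] [AddCommGroup V] [Module K V]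

def NonnegLinearIndepOn (v : ι → V) (s : Finset ι) : Prop :=
  ∀ c : ι → K, (∀ i ∈ s, 0 ≤ c i) → ∑ i ∈ s, c i • v i = 0 → ∀ i ∈ s, c i = 0

variable {K}

theorem NonnegLinearIndepOn.mono [DecidableEq ι] {v : ι → V} {s t : Finset ι}
    (h : NonnegLinearIndepOn K v t) (hst : s ⊆ t) : NonnegLinearIndepOn K v s := by
  intro c hc hsum i hi
  have := h (fun i => if i ∈ s then c i else 0) (fun i _ => by split_ifs with his; exacts [hc i his, le_rfl])
    (by simpa [ite_smul, Finset.sum_ite_mem, Finset.inter_eq_right.mpr hst] using hsum) i (hst hi)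
  simpa [hi] using this

variable [IsStrictOrderedRing K]

theorem NonnegLinearIndepOn.ne_zero {v : ι → V} {s : Finset ι} (h : NonnegLinearIndepOn K v s)
    {a : ι} (ha : a ∈ s) : v a ≠ 0 := by
  classical
  intro h0
  have hsum : ∑ i ∈ s, (Pi.single a 1 : ι → K) i • v i = 0 := by
    rw [Finset.sum_eq_single_of_mem a ha fun j _ hj => by simp [hj]]
    simp [h0]
  simpa using h (Pi.single a 1) (fun i _ => by rcases eq_or_ne i a with rfl | hi <;> simp [*]) hsum a ha

theorem NonnegLinearIndepOn.quotient_span_singleton [DecidableEq ι] {v : ι → V} {s : Finset ι}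
    {a : ι} (h : NonnegLinearIndepOn K v (insert a s)) (ha : a ∉ s) (y : Module.Dual K V)
    (hy : ∀ i ∈ s, 0 < y (v i)) (hya : y (v a) ≤ 0) :
    NonnegLinearIndepOn K ((K ∙ v a).mkQ ∘ v) s := by
  intro c hc hsum
  -- A relation `t • v a = ∑ c i • v i` is excluded by `h` if `t ≤ 0` and by `y` if `0 < t`.
  obtain ⟨t, ht⟩ : ∃ t : K, t • v a = ∑ i ∈ s, c i • v i := by
    rw [← Submodule.mem_span_singleton, ← Submodule.Quotient.mk_eq_zero, ← Submodule.mkQ_apply,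
      map_sum]
    simpa using hsum
  rcases le_or_gt t 0 with ht0 | ht0
  · have := h (Function.update c a (-t)) ?_ ?_
    · intro i hi
      simpa [Function.update_of_ne (ne_of_mem_of_not_mem hi ha)] using this i (by simp [hi])
    · intro i hi
      rcases Finset.mem_insert.mp hi with rfl | hi
      · simpa using ht0
      · simpa [Function.update_of_ne (ne_of_mem_of_not_mem hi ha)] using hc i hi
    · rw [Finset.sum_insert ha, Finset.sum_congr rfl fun i hi =>
        by rw [Function.update_of_ne (ne_of_mem_of_not_mem hi ha)], ← ht]
      simp
  · have hterms : ∀ i ∈ s, 0 ≤ c i * y (v i) := fun i hi => mul_nonneg (hc i hi) (hy i hi).le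
    have hzero : ∑ i ∈ s, c i * y (v i) = 0 := by
      refine le_antisymm ?_ (Finset.sum_nonneg hterms)
      have : y (t • v a) = ∑ i ∈ s, c i * y (v i) := by simp [ht]
      rw [← this, map_smul, smul_eq_mul]
      exact mul_nonpos_of_nonneg_of_nonpos ht0.le hya
    intro i hi
    exact (mul_eq_zero.mp (((Finset.sum_eq_zero_iff_of_nonneg hterms).mp hzero) i hi)).resolve_right
      (hy i hi).ne'

open Filter in
theorem exists_forall_pos_mul_add {s : Finset ι} {a b : ι → K} (ha : ∀ i ∈ s, 0 < a i) :
    ∃ M : K, ∀ i ∈ s, 0 < M * a i + b i :=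
  ((eventually_all_finset s).mpr fun i hi =>
    (tendsto_atTop_add_const_right _ (b i) (tendsto_id.atTop_mul_const (ha i hi))).eventually
      (eventually_gt_atTop 0)).exists

/-- **Gordan's lemma**. -/
theorem NonnegLinearIndepOn.exists_dual_pos {v : ι → V} {s : Finset ι}
    (h : NonnegLinearIndepOn K v s) : ∃ f : Module.Dual K V, ∀ i ∈ s, 0 < f (v i) := by
  classical
  induction s using Finset.induction_on generalizing V with
  | empty => exact ⟨0, by simp⟩
  | insert a s ha ih =>
    obtain ⟨y, hy⟩ := ih (h.mono (Finset.subset_insert a s))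
    by_cases hya : 0 < y (v a)
    · exact ⟨y, Finset.forall_mem_insert _ _ _ |>.mpr ⟨hya, hy⟩⟩
    obtain ⟨z, hz⟩ := ih (h.quotient_span_singleton ha y hy (not_lt.mp hya))
    obtain ⟨g, hg⟩ : ∃ g : Module.Dual K V, g (v a) = 1 := by
      obtain ⟨g, hg⟩ := not_forall.mp <|
        mt (Module.forall_dual_apply_eq_zero_iff K (v a)).mp (h.ne_zero (Finset.mem_insert_self a s))
      exact ⟨(g (v a))⁻¹ • g, by simp [hg]⟩
    obtain ⟨M, hM⟩ := exists_forall_pos_mul_add (b := fun i => g (v i)) hz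
    refine ⟨M • z ∘ₗ (K ∙ v a).mkQ + g, Finset.forall_mem_insert _ _ _ |>.mpr ⟨?_, fun i hi => ?_⟩⟩
    · simp [hg, (Submodule.Quotient.mk_eq_zero _).mpr (Submodule.mem_span_singleton_self (v a))]
    · simpa using hM i hi

end Gordan

namespace GradedAlgebra

variable {ι R A : Type*} [DecidableEq ι] [AddCommMonoid ι] [CommSemiring R] [Semiring A]
  [Algebra R A] (𝒜 : ι → Submodule R A) [GradedAlgebra 𝒜]

theorem biSup_mul_biSup_le (N : AddSubmonoid ι) :
    (⨆ i ∈ N, 𝒜 i) * (⨆ j ∈ N, 𝒜 j) ≤ ⨆ i ∈ N, 𝒜 i := by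
  simp only [Submodule.iSup_mul, Submodule.mul_iSup]
  refine iSup₂_le fun j hj => iSup₂_le fun i hi => ?_
  exact le_iSup₂_of_le (f := fun k (_ : k ∈ N) => 𝒜 k) (i + j) (add_mem hi hj)
    (Submodule.mul_le.mpr fun a ha b hb => SetLike.mul_mem_graded ha hb)

def biSupSubalgebra (N : AddSubmonoid ι) : Subalgebra R A :=
  (⨆ i ∈ N, 𝒜 i).toSubalgebra
    (le_iSup₂ (f := fun k (_ : k ∈ N) => 𝒜 k) 0 N.zero_mem (SetLike.one_mem_graded 𝒜))
    (fun _ _ hx hy => biSup_mul_biSup_le 𝒜 N (Submodule.mul_mem_mul hx hy))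

theorem eq_bot_of_notMem_of_biSup_eq_top {N : AddSubmonoid ι} (hN : ⨆ i ∈ N, 𝒜 i = ⊤) {i : ι}
    (hi : i ∉ N) : 𝒜 i = ⊥ := by
  have := (DirectSum.Decomposition.isInternal 𝒜).submodule_iSupIndep.disjoint_biSup
    (y := (N : Set ι)) hi
  simpa only [SetLike.mem_coe, hN, disjoint_top] using this

theorem exists_finset_forall_ne_bot_mem_closure (hfg : Algebra.FiniteType R A) :
    ∃ S : Finset ι, (∀ i ∈ S, 𝒜 i ≠ ⊥) ∧
      ∀ i, 𝒜 i ≠ ⊥ → i ∈ AddSubmonoid.closure (S : Set ι) := by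
  classical
  obtain ⟨s, hs⟩ := hfg.out
  let S := s.biUnion fun a => (DirectSum.decompose 𝒜 a).support
  let N := AddSubmonoid.closure (S : Set ι)
  have hN : biSupSubalgebra 𝒜 N = ⊤ := by
    rw [eq_top_iff, ← hs, Algebra.adjoin_le_iff]
    intro a ha
    rw [← DirectSum.sum_support_decompose 𝒜 a]
    refine sum_mem fun i hi =>
      le_iSup₂ (f := fun k (_ : k ∈ N) => 𝒜 k) i (AddSubmonoid.subset_closure ?_) (Subtype.prop _)
    exact Finset.mem_biUnion.mpr ⟨a, ha, hi⟩
  refine ⟨S, fun i hi h => ?_, fun i hi => by_contra fun hiN => hi ?_⟩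
  · obtain ⟨a, -, ha⟩ := Finset.mem_biUnion.mp hi
    exact DFinsupp.mem_support_iff.mp ha (Subtype.ext
      ((Submodule.eq_bot_iff _).mp h _ (DirectSum.decompose 𝒜 a i).2))
  · refine eq_bot_of_notMem_of_biSup_eq_top 𝒜 ?_ hiN
    simpa [biSupSubalgebra] using congrArg Subalgebra.toSubmodule hN

end GradedAlgebra

theorem AddMonoidHom.eq_zero_or_pos_of_mem_closure {M Γ : Type*} [AddMonoid M] [AddCommMonoid Γ]
    [PartialOrder Γ] [IsOrderedCancelAddMonoid Γ] (φ : M →+ Γ) {S : Set M}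
    (hS : ∀ x ∈ S, x ≠ 0 → 0 < φ x) {w : M} (hw : w ∈ AddSubmonoid.closure S) :
    w = 0 ∨ 0 < φ w := by
  induction hw using AddSubmonoid.closure_induction with
  | mem x hx => exact or_iff_not_imp_left.mpr (hS x hx)
  | zero => exact Or.inl rfl
  | add x y _ _ hx hy =>
    rcases hx with rfl | hx
    · simpa using hy
    rcases hy with rfl | hy
    · simpa using Or.inr hx
    exact Or.inr (by simpa using add_pos hx hy)

theorem exists_pos_nat_mul_eq_intCast {ι : Type*} [Fintype ι] (q : ι → ℚ) :
    ∃ D : ℕ, 0 < D ∧ ∀ i, ∃ m : ℤ, (m : ℚ) = D * q i := by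
  refine ⟨∏ i, (q i).den, Finset.prod_pos fun i _ => (q i).pos, fun i => ?_⟩
  obtain ⟨r, hr⟩ := Finset.dvd_prod_of_mem (fun i => (q i).den) (Finset.mem_univ i)
  refine ⟨(q i).num * r, ?_⟩
  rw [hr, Nat.cast_mul, mul_right_comm, Rat.den_mul_eq_num]
  push_cast
  ring

theorem Module.Dual.exists_int_addMonoidHom_eq_nat_mul {k : ℕ} (y : Module.Dual ℚ (Fin k → ℚ)) :
    ∃ (φ : (Fin k → ℤ) →+ ℤ) (D : ℕ), 0 < D ∧ ∀ w, (φ w : ℚ) = D * y fun i => (w i : ℚ) := by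
  obtain ⟨D, hD, hm⟩ := exists_pos_nat_mul_eq_intCast fun i => y (Pi.single i 1)
  choose m hm using hm
  refine ⟨∑ i, m i • Pi.evalAddMonoidHom (fun _ => ℤ) i, D, hD, fun w => ?_⟩
  rw [LinearMap.pi_apply_eq_sum_univ y, Finset.mul_sum]
  simp only [AddMonoidHom.finsetSum_apply, AddMonoidHom.smul_apply, Pi.evalAddMonoidHom_apply,
    smul_eq_mul, Int.cast_sum, Int.cast_mul, hm]
  refine Finset.sum_congr rfl fun i _ => ?_
  rw [show (fun j => if i = j then (1 : ℚ) else 0) = Pi.single i 1 by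
    ext j; simp [Pi.single_apply, eq_comm]]
  ring

variable {k : ℕ} {A : Type} [CommRing A] [Algebra ℂ A] (𝒜 : (Fin k → ℤ) → Submodule ℂ A)

theorem inWeightCone_of_ne_bot {w : Fin k → ℤ} (hw : 𝒜 w ≠ ⊥) :
    InWeightCone 𝒜 fun i => (w i : ℚ) :=
  ⟨{w}, 1, by simpa using hw, by simp⟩

theorem nonnegLinearIndepOn_of_pointed
    (hpointed : ∀ v : Fin k → ℚ, InWeightCone 𝒜 v → InWeightCone 𝒜 (-v) → v = 0)
    {s : Finset (Fin k → ℤ)} (hs : ∀ w ∈ s, 𝒜 w ≠ ⊥) (hs0 : 0 ∉ s) :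
    NonnegLinearIndepOn ℚ (fun (w : Fin k → ℤ) (i : Fin k) => (w i : ℚ)) s := by
  intro c hc hsum w hw
  by_contra hcw
  have hpos : 0 < c w := (hc w hw).lt_of_ne' hcw
  -- `-w` is the nonnegative combination `∑_{u ≠ w} (c u / c w) • u`.
  have hneg : InWeightCone 𝒜 (-fun i => (w i : ℚ)) := by
    refine ⟨s.erase w, fun u => (c w)⁻¹ * c u, fun u hu => ?_, ?_⟩
    · have hu := Finset.mem_of_mem_erase hu
      exact ⟨hs u hu, mul_nonneg (inv_nonneg.mpr hpos.le) (hc u hu)⟩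
    · rw [← Finset.add_sum_erase s _ hw] at hsum
      simp_rw [mul_smul, ← Finset.smul_sum, eq_neg_of_add_eq_zero_right hsum, smul_neg,
        inv_smul_smul₀ hpos.ne']
  have hw0 : w = 0 := by
    ext i
    simpa using congrFun (hpointed _ (inWeightCone_of_ne_bot 𝒜 (hs w hw)) hneg) i
  exact hs0 (hw0 ▸ hw)

theorem quasicone_of_pointed_weight_cone_general
    (k : ℕ) (A : Type) [CommRing A] [Algebra ℂ A]
    (𝒜 : (Fin k → ℤ) → Submodule ℂ A) [GradedAlgebra 𝒜]
    (hfg : Algebra.FiniteType ℂ A)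
    (hpointed : ∀ v : Fin k → ℚ, InWeightCone 𝒜 v → InWeightCone 𝒜 (-v) → v = 0) :
    ∃ φ : (Fin k → ℤ) →+ ℤ,
      (∀ w : Fin k → ℤ, 𝒜 w ≠ ⊥ → 0 ≤ φ w) ∧
      (∀ w : Fin k → ℤ, 𝒜 w ≠ ⊥ → φ w = 0 → w = 0) := by
  obtain ⟨S, hSne, hScl⟩ := GradedAlgebra.exists_finset_forall_ne_bot_mem_closure 𝒜 hfg
  obtain ⟨y, hy⟩ := (nonnegLinearIndepOn_of_pointed 𝒜 hpointed
    (fun w hw => hSne w (Finset.mem_of_mem_erase hw)) (Finset.notMem_erase 0 S)).exists_dual_pos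
  obtain ⟨φ, D, hD, hφ⟩ := y.exists_int_addMonoidHom_eq_nat_mul
  have hφS : ∀ w ∈ (S : Set (Fin k → ℤ)), w ≠ 0 → 0 < φ w := fun w hw hw0 => by
    have := mul_pos (Nat.cast_pos.mpr hD) (hy w (Finset.mem_erase.mpr ⟨hw0, hw⟩))
    exact_mod_cast (hφ w).symm ▸ this
  refine ⟨φ, fun w hw => ?_, fun w hw hφw => ?_⟩
  · rcases φ.eq_zero_or_pos_of_mem_closure hφS (hScl w hw) with rfl | h
    · simp
    · exact h.le
  · exact (φ.eq_zero_or_pos_of_mem_closure hφS (hScl w hw)).resolve_right hφw.not_gt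

theorem quasicone_of_pointed_weight_cone
    (k : ℕ) (A : Type) [CommRing A] [Algebra ℂ A]
    (𝒜 : (Fin k → ℤ) → Submodule ℂ A) [GradedAlgebra 𝒜]
    (hfg : Algebra.FiniteType ℂ A)
    (h0 : (𝒜 0 : Set A) = Set.range (algebraMap ℂ A))
    (hpointed : ∀ v : Fin k → ℚ, InWeightCone 𝒜 v → InWeightCone 𝒜 (-v) → v = 0) :
    ∃ φ : (Fin k → ℤ) →+ ℤ,
      (∀ w : Fin k → ℤ, 𝒜 w ≠ ⊥ → 0 ≤ φ w) ∧
      (∀ w : Fin k → ℤ, 𝒜 w ≠ ⊥ → φ w = 0 → w = 0) :=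
  quasicone_of_pointed_weight_cone_general k A 𝒜 hfg hpointed
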